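/- arXiv:2201.13353 — 4 statements merged into one kernel-verified Lean document; each statement's English description precedes it below -/
import Mathlib

section
/- Let h, j, s be integers with 1 ≤ s ≤ j−1, and let ρ ∈ S_h be a permutation with norm N(ρ) = j. If there exists at least one pair (σ, τ) of permutations in S_h with σ of cycle type (2,…,2) consisting of s twos, τ of cycle type {j+1−s} (a single (j+1−s)-cycle), and στ = ρ, then the cycle type of ρ is either Multiset.replicate r 2 + {j+1−r} for some 0 ≤ r ≤ j−2, or Multiset.replicate j 2 (i.e., ρ is a product of j disjoint transpositions). -/
/-- The norm of a permutation: the sum over its cycle type of (cycle length − 1). -/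
def permNorm {α : Type*} [Fintype α] [DecidableEq α] (σ : Equiv.Perm α) : ℕ :=
  (σ.cycleType.map (· - 1)).sum

/-!
The norm is subadditive: multiplying by a transposition changes it by at most one, and a cycle
of length `m` is a product of `m - 1` transpositions. Since `N(σ * τ) = N(σ) + N(τ)`, no
transposition of `σ` can have both points in the support of the cycle `τ`: moving it into `τ`
would give a shorter factorisation. So `σ` either fixes `τ x` or moves it out of `supp τ`, which
puts `x` and `τ x` on the same cycle of `ρ = σ * τ`; hence `supp τ` lies in one cycle of `ρ`,
while every cycle of `ρ` avoiding `supp τ` is a transposition of `σ`. Thus `ρ` has at most one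
cycle of length at least `3`, and `N(ρ) = j` fixes its length.
-/

open Finset

namespace Equiv.Perm

theorem SameCycle.of_forall_sameCycle_apply {α : Type*} {f g : Perm α}
    (hfg : ∀ x, g.SameCycle x (f x)) {x y : α} (h : f.SameCycle x y) : g.SameCycle x y := by
  obtain ⟨i, rfl⟩ := h
  induction i using Int.induction_on with
  | zero => exact SameCycle.refl _ _
  | succ i ih =>
    rw [add_comm, zpow_add, zpow_one, mul_apply]
    exact ih.trans (hfg _)
  | pred i ih =>
    rw [sub_eq_neg_add, zpow_add, zpow_neg_one, mul_apply]
    refine ih.trans (SameCycle.symm ?_)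
    simpa using hfg (f⁻¹ ((f ^ (-(i : ℤ))) x))

variable {α : Type*} [Fintype α] [DecidableEq α]

theorem disjoint_mul_inv_cycleOf (f : Perm α) (x : α) :
    (f * (f.cycleOf x)⁻¹).Disjoint (f.cycleOf x) := by
  by_cases hx : f x = x
  · simp [(cycleOf_eq_one_iff f).mpr hx]
  · exact disjoint_mul_inv_of_mem_cycleFactorsFinset
      (cycleOf_mem_cycleFactorsFinset_iff.mpr (mem_support.mpr hx))

theorem mul_inv_cycleOf_apply_self (f : Perm α) (x : α) : (f * (f.cycleOf x)⁻¹) x = x := by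
  simp [cycleOf_inv]

theorem support_mul_inv_cycleOf_subset (f : Perm α) (x : α) :
    (f * (f.cycleOf x)⁻¹).support ⊆ f.support :=
  (support_mul_le _ _).trans (sup_le le_rfl ((support_inv _).le.trans (support_cycleOf_le f x)))

end Equiv.Perm

open Equiv Equiv.Perm

section

variable {α : Type*} [Fintype α] [DecidableEq α]

theorem permNorm_add_card_cycleType (f : Perm α) :
    permNorm f + Multiset.card f.cycleType = #f.support := by
  have hsucc : ∀ n ∈ f.cycleType, n - 1 + 1 = n := fun n hn => by
    have := two_le_of_mem_cycleType hn; omega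
  have hcard : Multiset.card f.cycleType = (f.cycleType.map fun _ => 1).sum := by simp
  rw [← sum_cycleType, permNorm, hcard, ← Multiset.sum_map_add, Multiset.map_congr rfl hsucc,
    Multiset.map_id']

@[simp]
theorem permNorm_one : permNorm (1 : Perm α) = 0 := by
  simp [permNorm]

theorem Equiv.Perm.Disjoint.permNorm_mul {f g : Perm α} (h : f.Disjoint g) :
    permNorm (f * g) = permNorm f + permNorm g := by
  simp [permNorm, h.cycleType_mul]

theorem permNorm_le_card_support_sub_one (f : Perm α) : permNorm f ≤ #f.support - 1 := by
  have := permNorm_add_card_cycleType f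
  rcases eq_or_ne f 1 with rfl | hf
  · simp
  · have := card_cycleType_pos.mpr hf
    omega

theorem Equiv.Perm.IsCycle.permNorm_eq {c : Perm α} (hc : c.IsCycle) :
    permNorm c = #c.support - 1 := by
  have := permNorm_add_card_cycleType c
  rw [hc.cycleType, Multiset.card_singleton] at this
  omega

theorem card_insert_support_cycleOf_le (f : Perm α) (x : α) :
    #(insert x (f.cycleOf x).support) ≤ permNorm (f.cycleOf x) + 1 := by
  by_cases hx : f x = x
  · simp [(cycleOf_eq_one_iff f).mpr hx]
  · have hc := isCycle_cycleOf f hx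
    have hmem : x ∈ (f.cycleOf x).support := by
      rw [mem_support_cycleOf_iff]
      exact ⟨SameCycle.refl _ _, mem_support.mpr hx⟩
    rw [insert_eq_of_mem hmem, hc.permNorm_eq]
    have := hc.two_le_card_support
    omega

theorem permNorm_swap_mul_le_of_disjoint {g d : Perm α} (hgd : g.Disjoint d) {a b : α}
    (hab : a ≠ b) (ha : d a = a) (hb : d b = b)
    (hcard : #(insert a (insert b g.support)) ≤ permNorm g + 2) :
    permNorm (swap a b * (g * d)) ≤ permNorm (g * d) + 1 := by
  have hsupp : (swap a b * g).support ⊆ insert a (insert b g.support) := by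
    refine (support_mul_le _ _).trans (sup_le ?_ ((subset_insert _ _).trans (subset_insert _ _)))
    rw [support_swap hab]
    exact insert_subset_insert _ (singleton_subset_iff.mpr (mem_insert_self _ _))
  have hdisj : (swap a b * g).Disjoint d := by
    rw [disjoint_iff_disjoint_support] at hgd ⊢
    refine _root_.Disjoint.mono_left hsupp ?_
    simp [notMem_support.mpr ha, notMem_support.mpr hb, hgd]
  rw [← mul_assoc, hdisj.permNorm_mul, hgd.permNorm_mul]
  have := permNorm_le_card_support_sub_one (swap a b * g)
  have := card_le_card hsupp
  omega

theorem permNorm_swap_mul_le (f : Perm α) (a b : α) :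
    permNorm (swap a b * f) ≤ permNorm f + 1 := by
  rcases eq_or_ne a b with rfl | hab
  · simp [swap_self, ← Perm.one_def]
  -- `cb * ca` is the product of the cycles of `f` through `a` and `b` (`cb = 1` if these
  -- coincide), and `d₂` is the rest of `f`.
  set ca := f.cycleOf a
  set d₁ := f * ca⁻¹
  set cb := d₁.cycleOf b
  set d₂ := d₁ * cb⁻¹
  have hd₂ : d₂.support ⊆ d₁.support := support_mul_inv_cycleOf_subset d₁ b
  have hba : cb.Disjoint ca :=
    (disjoint_mul_inv_cycleOf f a).mono (support_cycleOf_le d₁ b) le_rfl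
  have hdisj : (cb * ca).Disjoint d₂ :=
    (Disjoint.mul_right (disjoint_mul_inv_cycleOf d₁ b)
      ((disjoint_mul_inv_cycleOf f a).mono hd₂ le_rfl)).symm
  have hf : f = cb * ca * d₂ := by
    rw [hdisj.commute.eq]
    simp [d₂, d₁, mul_assoc]
  have ha : d₂ a = a := notMem_support.mp fun h =>
    mem_support.mp (hd₂ h) (mul_inv_cycleOf_apply_self f a)
  have hcard : #(insert a (insert b (cb * ca).support)) ≤ permNorm (cb * ca) + 2 := by
    rw [hba.permNorm_mul, hba.support_mul]
    calc #(insert a (insert b (cb.support ∪ ca.support)))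
        ≤ #(insert b cb.support ∪ insert a ca.support) := card_le_card (by grind)
      _ ≤ #(insert b cb.support) + #(insert a ca.support) := card_union_le _ _
      _ ≤ permNorm cb + 1 + (permNorm ca + 1) :=
          add_le_add (card_insert_support_cycleOf_le d₁ b) (card_insert_support_cycleOf_le f a)
      _ = permNorm cb + permNorm ca + 2 := by ring
  rw [hf]
  exact permNorm_swap_mul_le_of_disjoint hdisj hab ha (mul_inv_cycleOf_apply_self d₁ b) hcard

theorem Equiv.Perm.IsCycle.permNorm_mul_le {c : Perm α} (hc : c.IsCycle) (g : Perm α) :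
    permNorm (c * g) ≤ permNorm c + permNorm g := by
  obtain ⟨x, hx, -⟩ := id hc
  have hsplit : c * g = swap x (c x) * (swap x (c x) * c * g) := by
    simp [← mul_assoc]
  have hstep := permNorm_swap_mul_le (swap x (c x) * c * g) x (c x)
  rw [← hsplit] at hstep
  by_cases hcc : c (c x) = x
  · have hswap : swap x (c x) * c = 1 := by
      rw [hc.eq_swap_of_apply_apply_eq_self hx hcc, swap_apply_left]
      simp
    have := hc.two_le_card_support
    rw [hswap, one_mul] at hstep
    rw [hc.permNorm_eq]
    omega
  · have hc' := hc.swap_mul hx hcc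
    have hcard : #(swap x (c x) * c).support + 1 = #c.support := by
      rw [← insert_erase (mem_support.2 hx), support_swap_mul_eq _ _ hcc,
        card_insert_of_notMem (notMem_erase _ _), sdiff_singleton_eq_erase]
    have ih := hc'.permNorm_mul_le g
    have := hc'.two_le_card_support
    rw [hc'.permNorm_eq] at ih
    rw [hc.permNorm_eq]
    omega
termination_by #c.support
decreasing_by omega

theorem permNorm_mul_le (f g : Perm α) : permNorm (f * g) ≤ permNorm f + permNorm g := by
  induction f using cycle_induction_on generalizing g with
  | base_one => simp
  | base_cycles c hc => exact hc.permNorm_mul_le g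
  | induction_disjoint σ τ hστ _ hσ hτ =>
    rw [mul_assoc, hστ.permNorm_mul]
    have := hσ (τ * g)
    have := hτ g
    omega

theorem permNorm_mul_lt_of_support_subset {σ τ c : Perm α} (hτ : τ.IsCycle)
    (hc : c ∈ σ.cycleFactorsFinset) (hsub : c.support ⊆ τ.support) :
    permNorm (σ * τ) < permNorm σ + permNorm τ := by
  have hσ : permNorm σ = permNorm (σ * c⁻¹) + permNorm c := by
    rw [← (disjoint_mul_inv_of_mem_cycleFactorsFinset hc).permNorm_mul, inv_mul_cancel_right]
  have hcτ : permNorm (c * τ) ≤ permNorm τ := by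
    rw [hτ.permNorm_eq]
    refine (permNorm_le_card_support_sub_one _).trans (Nat.sub_le_sub_right (card_le_card ?_) 1)
    exact (support_mul_le _ _).trans (sup_le hsub le_rfl)
  have hc1 : 0 < permNorm c := by
    have hcyc := (mem_cycleFactorsFinset_iff.mp hc).1
    have := hcyc.two_le_card_support
    rw [hcyc.permNorm_eq]
    omega
  have := permNorm_mul_le (σ * c⁻¹) (c * τ)
  rw [show σ * c⁻¹ * (c * τ) = σ * τ by group] at this
  omega

theorem cycleType_eq_of_card_filter_le_one {f : Perm α}
    (hf : Multiset.card (f.cycleType.filter (3 ≤ ·)) ≤ 1) :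
    (∃ r, r ≤ permNorm f - 2 ∧
      f.cycleType = Multiset.replicate r 2 + {permNorm f + 1 - r}) ∨
      f.cycleType = Multiset.replicate (permNorm f) 2 := by
  set r := Multiset.card (f.cycleType.filter (¬ 3 ≤ ·))
  have hshort : f.cycleType.filter (¬ 3 ≤ ·) = Multiset.replicate r 2 := by
    refine Multiset.eq_replicate.mpr ⟨rfl, fun n hn => ?_⟩
    obtain ⟨hn, hlt⟩ := Multiset.mem_filter.mp hn
    have := two_le_of_mem_cycleType hn
    omega
  have hsplit := Multiset.filter_add_not (3 ≤ ·) f.cycleType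
  rw [hshort] at hsplit
  obtain h0 | h1 : Multiset.card (f.cycleType.filter (3 ≤ ·)) = 0 ∨
      Multiset.card (f.cycleType.filter (3 ≤ ·)) = 1 := by omega
  · rw [Multiset.card_eq_zero.mp h0, zero_add] at hsplit
    right
    rw [← hsplit, permNorm, ← hsplit]
    simp
  · obtain ⟨m, hm⟩ := Multiset.card_eq_one.mp h1
    have hm3 : 3 ≤ m := (Multiset.mem_filter.mp (hm ▸ Multiset.mem_singleton_self m)).2
    rw [hm, add_comm] at hsplit
    have hnorm : permNorm f = r + (m - 1) := by
      rw [permNorm, ← hsplit]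
      simp
    left
    refine ⟨r, by omega, ?_⟩
    rw [← hsplit, hnorm]
    congr 2
    omega

section

variable {σ τ : Perm α}

theorem apply_eq_self_of_permNorm_mul_eq (hσ : Function.Involutive σ) (hτ : τ.IsCycle)
    (hgeod : permNorm (σ * τ) = permNorm σ + permNorm τ) {a : α} (ha : a ∈ τ.support)
    (hσa : σ a ∈ τ.support) : σ a = a := by
  by_contra hne
  have hswap : σ.cycleOf a = swap a (σ a) := by
    simpa using (isCycle_cycleOf σ hne).eq_swap_of_apply_apply_eq_self (x := a)
      (by simpa) (by simp [hσ a])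
  have hsub : (σ.cycleOf a).support ⊆ τ.support := by
    rw [hswap, support_swap (Ne.symm hne)]
    exact insert_subset ha (singleton_subset_iff.mpr hσa)
  have := permNorm_mul_lt_of_support_subset hτ
    (cycleOf_mem_cycleFactorsFinset_iff.mpr (mem_support.mpr hne)) hsub
  omega

theorem sameCycle_mul_apply_right (hσ : Function.Involutive σ)
    (hsep : ∀ a ∈ τ.support, σ a ∈ τ.support → σ a = a) (x : α) :
    (σ * τ).SameCycle x (τ x) := by
  have hstep : (σ * τ).SameCycle x ((σ * τ) x) := sameCycle_apply_right.mpr (SameCycle.refl _ _)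
  by_cases hx : x ∈ τ.support
  · by_cases hy : σ (τ x) ∈ τ.support
    · rwa [mul_apply, hsep _ (apply_mem_support.mpr hx) hy] at hstep
    · -- `σ` moves `τ x` off `supp τ`, so `σ * τ` maps `σ (τ x)` back to `τ x`.
      have hback : (σ * τ) ((σ * τ) x) = τ x := by
        rw [mul_apply, mul_apply, notMem_support.mp hy, hσ]
      rw [← hback]
      exact sameCycle_apply_right.mpr hstep
  · rw [notMem_support.mp hx]

theorem not_disjoint_support_of_three_le_card_support (hσ : Function.Involutive σ) {c : Perm α}
    (hc : c ∈ (σ * τ).cycleFactorsFinset) (h3 : 3 ≤ #c.support) :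
    ¬ _root_.Disjoint c.support τ.support := by
  intro hdisj
  obtain ⟨hcyc, hagree⟩ := mem_cycleFactorsFinset_iff.mp hc
  obtain ⟨x, hx⟩ := hcyc.nonempty_support
  have hcx : c x ∈ c.support := apply_mem_support.mpr hx
  have hfix : ∀ z ∈ c.support, τ z = z := fun z hz =>
    notMem_support.mp (Finset.disjoint_left.mp hdisj hz)
  have hcc : c (c x) = x := by
    rw [hagree _ hcx, mul_apply, hfix _ hcx, hagree x hx, mul_apply, hfix x hx, hσ]
  rw [hcyc.eq_swap_of_apply_apply_eq_self (mem_support.mp hx) hcc,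
    card_support_swap (mem_support.mp hx).symm] at h3
  omega

theorem card_filter_cycleType_le_one (hσ : Function.Involutive σ)
    (hsep : ∀ a ∈ τ.support, σ a ∈ τ.support → σ a = a) (hτ : τ.IsCycle) :
    Multiset.card ((σ * τ).cycleType.filter (3 ≤ ·)) ≤ 1 := by
  rw [cycleType_def, Multiset.filter_map, Multiset.card_map, ← Finset.filter_val, ← card_def,
    card_le_one]
  intro c₁ hc₁ c₂ hc₂
  obtain ⟨hc₁, h₁⟩ := mem_filter.mp hc₁
  obtain ⟨hc₂, h₂⟩ := mem_filter.mp hc₂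
  obtain ⟨z₁, hz₁, hz₁τ⟩ := Finset.not_disjoint_iff.mp
    (not_disjoint_support_of_three_le_card_support hσ hc₁ h₁)
  obtain ⟨z₂, hz₂, hz₂τ⟩ := Finset.not_disjoint_iff.mp
    (not_disjoint_support_of_three_le_card_support hσ hc₂ h₂)
  rw [cycle_is_cycleOf hz₁ hc₁, cycle_is_cycleOf hz₂ hc₂]
  exact ((hτ.sameCycle (mem_support.mp hz₁τ) (mem_support.mp hz₂τ)).of_forall_sameCycle_apply
    (sameCycle_mul_apply_right hσ hsep)).cycleOf_eq

end

end

theorem cycleType_of_geodesic_factorization_general (h j s : ℕ)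
    (ρ : Equiv.Perm (Fin h)) (hρ : permNorm ρ = j)
    (hfac : ∃ σ τ : Equiv.Perm (Fin h),
      σ.cycleType = Multiset.replicate s 2 ∧
      τ.cycleType = {j + 1 - s} ∧ σ * τ = ρ) :
    (∃ r, r ≤ j - 2 ∧ ρ.cycleType = Multiset.replicate r 2 + {j + 1 - r}) ∨
      ρ.cycleType = Multiset.replicate j 2 := by
  obtain ⟨σ, τ, hσ, hτ, rfl⟩ := hfac
  have hσ2 : σ ^ 2 = 1 :=
    pow_prime_eq_one_iff.mpr fun n hn => Multiset.eq_of_mem_replicate (hσ ▸ hn)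
  have hσinv : Function.Involutive σ := fun x => by rw [← mul_apply, ← sq, hσ2, one_apply]
  have hτc : τ.IsCycle := card_cycleType_eq_one.mp (by rw [hτ, Multiset.card_singleton])
  have hlen : 2 ≤ j + 1 - s := two_le_of_mem_cycleType (hτ ▸ Multiset.mem_singleton_self _)
  have hgeod : permNorm (σ * τ) = permNorm σ + permNorm τ := by
    rw [hρ]
    simp [permNorm, hσ, hτ]
    omega
  have hsep : ∀ a ∈ τ.support, σ a ∈ τ.support → σ a = a := fun _ =>
    apply_eq_self_of_permNorm_mul_eq hσinv hτc hgeod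
  rw [← hρ]
  exact cycleType_eq_of_card_filter_le_one (card_filter_cycleType_le_one hσinv hsep hτc)

/-- If `ρ ∈ S_h` has norm `j` and factors as `ρ = στ` with `σ` a product of `s`
disjoint transpositions and `τ` a single `(j+1−s)`-cycle (`1 ≤ s ≤ j−1`), then the
cycle type of `ρ` is `(2^r, j+1−r)` for some `0 ≤ r ≤ j−2`, or `ρ` is a product of
`j` disjoint transpositions. -/
theorem cycleType_of_geodesic_factorization (h j s : ℕ) (hs1 : 1 ≤ s) (hs2 : s ≤ j - 1)
    (ρ : Equiv.Perm (Fin h)) (hρ : permNorm ρ = j)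
    (hfac : ∃ σ τ : Equiv.Perm (Fin h),
      σ.cycleType = Multiset.replicate s 2 ∧
      τ.cycleType = {j + 1 - s} ∧ σ * τ = ρ) :
    (∃ r, r ≤ j - 2 ∧ ρ.cycleType = Multiset.replicate r 2 + {j + 1 - r}) ∨
      ρ.cycleType = Multiset.replicate j 2 :=
  cycleType_of_geodesic_factorization_general h j s ρ hρ hfac
end

section
/- Let h, j, s, r be integers with 1 ≤ s ≤ j−1 and 0 ≤ r ≤ j−2, and let ρ ∈ S_h be a permutation whose cycle type is Multiset.replicate r 2 + {j+1−r} (r disjoint transpositions and one cycle of length j+1−r ≥ 3). Then the number of pairs (σ, τ) of permutations of S_h with σ of cycle type Multiset.replicate s 2, τ of cycle type {j+1−s}, and στ = ρ, when multiplied by (j+1−s), equals (j+1−r)·binom(j+1−s, s−r). Equivalently, this number of factorizations equals ((j+1−r)/(j+1−s))·binom(j+1−s, s−r). -/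
/-- The binomial coefficient `binom a b` for integer arguments, equal to `0`
when `b < 0` or `b > a`. -/
def binom (a b : ℤ) : ℕ :=
  if 0 ≤ b ∧ b ≤ a then a.toNat.choose b.toNat else 0

/-!
Write `ρ = δ * c` with `δ` the product of the `r` transpositions and `c` the `n`-cycle,
`n = j + 1 - r`, and put `k = s - r`, `m = j + 1 - s = n - k`. If `σ` is an involution moving
`2s` points and `σ⁻¹ * ρ` is an `m`-cycle, counting supports forces `σ = δ` on the support of
`δ`, and forces `σ` to be, on the support of `c`, the product of the transpositions `(b, c b)`
over a set `A` of `k` points of the cycle no two of which are consecutive. Conversely every such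
`A` occurs, because multiplying `c` by these transpositions deletes the points of `A` from the
cycle. So the factorizations correspond to the `k`-element independent sets of the `n`-cycle.
Cutting the cycle at a point `y ∉ A` leaves a path on `n - 1` points, which has
`binom(n - k, k)` independent `k`-sets; double counting the pairs `(A, y)` with `y ∉ A` gives
`(n - k) · #{A} = n · binom(n - k, k)`.
-/

open Finset Equiv Equiv.Perm

def nonconsecutiveSubsets (l k : ℕ) : Finset (Finset ℕ) :=
  {S ∈ (range l).powersetCard k | ∀ i ∈ S, i + 1 ∉ S}

lemma mem_nonconsecutiveSubsets {l k : ℕ} {S : Finset ℕ} :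
    S ∈ nonconsecutiveSubsets l k ↔ S ⊆ range l ∧ #S = k ∧ ∀ i ∈ S, i + 1 ∉ S := by
  simp [nonconsecutiveSubsets, mem_powersetCard, and_assoc]

lemma nonconsecutiveSubsets_zero_right (l : ℕ) : nonconsecutiveSubsets l 0 = {∅} := by
  ext S
  simp +contextual [mem_nonconsecutiveSubsets, iff_def]

lemma nonconsecutiveSubsets_zero_succ (k : ℕ) : nonconsecutiveSubsets 0 (k + 1) = ∅ := by
  ext S
  simp +contextual [mem_nonconsecutiveSubsets]

lemma filter_notMem_nonconsecutiveSubsets_succ (l k : ℕ) :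
    {S ∈ nonconsecutiveSubsets (l + 1) k | l ∉ S} = nonconsecutiveSubsets l k := by
  ext S
  simp only [mem_filter, mem_nonconsecutiveSubsets]
  constructor
  · rintro ⟨⟨hS, hcard, hsep⟩, hl⟩
    refine ⟨fun x hx => ?_, hcard, hsep⟩
    have := mem_range.1 (hS hx)
    have : x ≠ l := fun h => hl (h ▸ hx)
    exact mem_range.2 (by omega)
  · rintro ⟨hS, hcard, hsep⟩
    exact ⟨⟨hS.trans (range_subset_range.2 l.le_succ), hcard, hsep⟩,
      fun h => by simpa using hS h⟩

lemma card_filter_mem_nonconsecutiveSubsets_succ (l k : ℕ) :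
    #{S ∈ nonconsecutiveSubsets (l + 1) (k + 1) | l ∈ S} =
      #(nonconsecutiveSubsets (l - 1) k) := by
  refine card_nbij' (fun S => S.erase l) (insert l) ?_ ?_ ?_ ?_
  · intro S hS
    simp only [mem_coe, mem_filter, mem_nonconsecutiveSubsets] at hS
    obtain ⟨⟨hS, hcard, hsep⟩, hl⟩ := hS
    refine mem_nonconsecutiveSubsets.2 ⟨fun x hx => ?_, by simp [card_erase_of_mem hl, hcard],
      fun i hi hi' => hsep i (mem_of_mem_erase hi) (mem_of_mem_erase hi')⟩
    have := mem_range.1 (hS (mem_of_mem_erase hx))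
    have : x + 1 ≠ l := fun h => hsep x (mem_of_mem_erase hx) (h ▸ hl)
    exact mem_range.2 (by have := ne_of_mem_erase hx; omega)
  · intro T hT
    obtain ⟨hT, hcard, hsep⟩ := mem_nonconsecutiveSubsets.1 hT
    have hlt : ∀ x ∈ T, x + 1 < l := fun x hx => by have := mem_range.1 (hT hx); omega
    simp only [mem_coe, mem_filter, mem_nonconsecutiveSubsets, mem_insert_self, and_true]
    refine ⟨fun x hx => ?_, ?_, fun i hi hi' => ?_⟩
    · rcases mem_insert.1 hx with rfl | hx
      · simp
      · exact mem_range.2 (by have := hlt x hx; omega)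
    · rw [card_insert_of_notMem (fun h => by have := hlt l h; omega), hcard]
    · rcases mem_insert.1 hi with rfl | hi <;> rcases mem_insert.1 hi' with h | h
      · omega
      · have := hlt _ h; omega
      · have := hlt i hi; omega
      · exact hsep i hi h
  · intro S hS
    simp only [mem_coe, mem_filter] at hS
    exact insert_erase hS.2
  · intro T hT
    obtain ⟨hT, -, -⟩ := mem_nonconsecutiveSubsets.1 hT
    exact erase_insert fun h => by have := mem_range.1 (hT h); omega

lemma card_nonconsecutiveSubsets_succ_succ (l k : ℕ) :
    #(nonconsecutiveSubsets (l + 1) (k + 1)) =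
      #(nonconsecutiveSubsets l (k + 1)) + #(nonconsecutiveSubsets (l - 1) k) := by
  rw [← card_filter_add_card_filter_not (fun S => l ∈ S),
    card_filter_mem_nonconsecutiveSubsets_succ, filter_notMem_nonconsecutiveSubsets_succ,
    add_comm]

theorem card_nonconsecutiveSubsets (l k : ℕ) :
    #(nonconsecutiveSubsets l k) = (l + 1 - k).choose k := by
  induction l using Nat.strong_induction_on generalizing k with
  | _ l ih =>
  rcases k with _ | k
  · simp [nonconsecutiveSubsets_zero_right]
  rcases l with _ | l
  · simp [nonconsecutiveSubsets_zero_succ]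
  rw [card_nonconsecutiveSubsets_succ_succ, ih l (by omega), ih (l - 1) (by omega)]
  rcases l with _ | l
  · rcases k with _ | k <;> simp
  obtain hk | hk := le_or_gt k (l + 1)
  · rw [show l + 1 + 1 + 1 - (k + 1) = l + 1 - k + 1 by omega, Nat.choose_succ_succ',
      show l + 1 - 1 + 1 - k = l + 1 - k by omega, show l + 1 + 1 - (k + 1) = l + 1 - k by omega,
      add_comm]
  · rw [Nat.choose_eq_zero_of_lt (by omega), Nat.choose_eq_zero_of_lt (by omega),
      Nat.choose_eq_zero_of_lt (by omega)]

section Transport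

variable {α : Type*} [DecidableEq α]

theorem card_filter_powersetCard_eq_card_nonconsecutiveSubsets {f : α → α} {φ : ℕ → α}
    {T : Finset α} {L k : ℕ} (hφ : Set.InjOn φ (range L)) (himage : (range L).image φ = T)
    (hadj : ∀ i < L, ∀ i' < L, f (φ i) = φ i' ↔ i' = i + 1) :
    #{A ∈ T.powersetCard k | ∀ b ∈ A, f b ∉ A} = #(nonconsecutiveSubsets L k) := by
  have image_preimage : ∀ A ⊆ T, {i ∈ range L | φ i ∈ A}.image φ = A := fun A hA => by
    refine (image_subset_iff.2 fun i hi => (mem_filter.1 hi).2).antisymm fun a ha => ?_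
    obtain ⟨i, hi, rfl⟩ := mem_image.1 (himage ▸ hA ha)
    exact mem_image_of_mem φ (mem_filter.2 ⟨hi, ha⟩)
  symm
  refine card_nbij' (fun S => S.image φ) (fun A => {i ∈ range L | φ i ∈ A}) ?_ ?_ ?_ ?_
  · intro S hS
    obtain ⟨hS, hcard, hsep⟩ := mem_nonconsecutiveSubsets.1 hS
    simp only [mem_coe, mem_filter, mem_powersetCard, mem_image]
    refine ⟨⟨himage ▸ image_subset_image hS,
      by rw [card_image_of_injOn (hφ.mono hS), hcard]⟩, ?_⟩
    rintro _ ⟨i, hi, rfl⟩ ⟨i', hi', heq⟩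
    rw [eq_comm, hadj i (mem_range.1 (hS hi)) i' (mem_range.1 (hS hi'))] at heq
    exact hsep i hi (heq ▸ hi')
  · intro A hA
    simp only [mem_coe, mem_filter, mem_powersetCard] at hA
    obtain ⟨⟨hAT, hcard⟩, hsep⟩ := hA
    refine mem_nonconsecutiveSubsets.2 ⟨filter_subset _ _, ?_, fun i hi hi' => ?_⟩
    · rw [← hcard, ← card_image_of_injOn (hφ.mono (filter_subset _ _)), image_preimage A hAT]
    · simp only [mem_filter, mem_range] at hi hi'
      exact hsep _ hi.2 (((hadj i hi.1 (i + 1) hi'.1).2 rfl) ▸ hi'.2)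
  · intro S hS
    obtain ⟨hS, -, -⟩ := mem_nonconsecutiveSubsets.1 hS
    ext i
    simp only [mem_filter, mem_image]
    constructor
    · rintro ⟨hi, i', hi', heq⟩
      exact hφ (hS hi') hi heq ▸ hi'
    · exact fun hi => ⟨hS hi, i, hi, rfl⟩
  · intro A hA
    simp only [mem_coe, mem_filter, mem_powersetCard] at hA
    exact image_preimage A hA.1.1

end Transport

namespace Equiv.Perm

variable {α : Type*}

lemma apply_apply_of_sq_eq_one {σ : Perm α} (h : σ ^ 2 = 1) (x : α) : σ (σ x) = x := by
  rw [← mul_apply, ← sq, h, one_apply]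

lemma mul_inv_mul_mul_eq {δ c W : Perm α} (hW : W ^ 2 = 1) :
    (δ * W)⁻¹ * (δ * c) = W * c := by
  rw [mul_inv_rev, mul_assoc, inv_mul_cancel_left, inv_eq_of_mul_eq_one_right (sq W ▸ hW)]

variable [DecidableEq α]

lemma swap_mul_apply_of_mem {c : Perm α} {A : Finset α} {x : α} (hxA : x ∉ A)
    (hindep : ∀ b ∈ insert x A, c b ∉ insert x A) {b : α} (hb : b ∈ A) :
    (swap x (c x) * c) b = c b := by
  refine swap_apply_of_ne_of_ne (fun h => hindep b (mem_insert_of_mem hb) ?_) ?_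
  · exact h ▸ mem_insert_self x A
  · exact fun h => hxA (c.injective h ▸ hb)

variable [Fintype α]

lemma card_support_le_card_support_add (σ ρ : Perm α) :
    #ρ.support ≤ #σ.support + #(σ⁻¹ * ρ).support :=
  calc #ρ.support = #(σ * (σ⁻¹ * ρ)).support := by rw [mul_inv_cancel_left]
    _ ≤ #(σ.support ∪ (σ⁻¹ * ρ).support) := card_le_card (support_mul_le _ _)
    _ ≤ _ := card_union_le _ _

lemma IsCycle.isCycleOn_support {c : Perm α} (hc : c.IsCycle) :
    c.IsCycleOn (c.support : Set α) := by
  rw [coe_support_eq_set_support]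
  exact hc.isCycleOn

lemma IsCycle.pow_apply_eq_pow_apply_iff {c : Perm α} {y : α} (hc : c.IsCycle)
    (hy : y ∈ c.support) {i j : ℕ} (hi : i < #c.support) (hj : j < #c.support) :
    (c ^ i) y = (c ^ j) y ↔ i = j :=
  (hc.isCycleOn_support.pow_apply_eq_pow_apply hy).trans
    ⟨fun h => h.eq_of_lt_of_lt hi hj, fun h => h ▸ rfl⟩

lemma IsCycle.apply_apply_ne {c : Perm α} {x : α} (hc : c.IsCycle) (h3 : 3 ≤ #c.support)
    (hx : x ∈ c.support) : c (c x) ≠ x := fun h => by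
  have := (hc.pow_apply_eq_pow_apply_iff hx (i := 2) (j := 0) (by omega) (by omega)).1 h
  omega

theorem cycleType_eq_replicate_two_iff {σ : Perm α} {t : ℕ} :
    σ.cycleType = Multiset.replicate t 2 ↔ σ ^ 2 = 1 ∧ #σ.support = 2 * t := by
  constructor
  · intro h
    refine ⟨pow_prime_eq_one_iff.2 fun n hn => Multiset.eq_of_mem_replicate (h ▸ hn), ?_⟩
    rw [← sum_cycleType, h, Multiset.sum_replicate, smul_eq_mul, mul_comm]
  · rintro ⟨h2, hcard⟩
    have h := cycleType_of_pow_prime_eq_one h2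
    rw [← sum_cycleType, h, Multiset.sum_replicate, smul_eq_mul, mul_comm] at hcard
    rwa [← Nat.eq_of_mul_eq_mul_left two_pos hcard]

theorem exists_disjoint_mul_isCycle_of_cycleType_eq_add {ρ : Perm α} {M : Multiset ℕ} {n : ℕ}
    (hρ : ρ.cycleType = M + {n}) :
    ∃ δ c : Perm α,
      δ.Disjoint c ∧ ρ = δ * c ∧ δ.cycleType = M ∧ c.IsCycle ∧ #c.support = n := by
  have hn : n ∈ ρ.cycleType :=
    hρ ▸ Multiset.mem_add.2 (Or.inr (Multiset.mem_singleton_self n))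
  obtain ⟨c, hcρ, hcn⟩ := Multiset.mem_map.1 (cycleType_def ρ ▸ hn)
  have hc := (mem_cycleFactorsFinset_iff.1 hcρ).1
  refine ⟨ρ * c⁻¹, c, disjoint_mul_inv_of_mem_cycleFactorsFinset hcρ, by simp, ?_, hc, hcn⟩
  rw [cycleType_mul_inv_mem_cycleFactorsFinset_eq_sub hcρ, hρ, hc.cycleType,
    show #c.support = n from hcn, add_tsub_cancel_right]

def independentSubsets (c : Perm α) (k : ℕ) : Finset (Finset α) :=
  {A ∈ c.support.powersetCard k | ∀ b ∈ A, c b ∉ A}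

lemma mem_independentSubsets {c : Perm α} {k : ℕ} {A : Finset α} :
    A ∈ independentSubsets c k ↔ A ⊆ c.support ∧ #A = k ∧ ∀ b ∈ A, c b ∉ A := by
  simp [independentSubsets, mem_powersetCard, and_assoc]

/-- Cut the cycle at `y`: `i ↦ (c ^ (i + 1)) y` runs through `c.support \ {y}` along a path. -/
theorem IsCycle.card_filter_notMem_independentSubsets {c : Perm α} {y : α} (hc : c.IsCycle)
    (hy : y ∈ c.support) (k : ℕ) :
    #{A ∈ independentSubsets c k | y ∉ A} = (#c.support - k).choose k := by
  set n := #c.support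
  have hn := hc.two_le_card_support
  have hinj : ∀ i < n, ∀ j < n, (c ^ i) y = (c ^ j) y ↔ i = j :=
    fun i hi j hj => hc.pow_apply_eq_pow_apply_iff hy hi hj
  have hset : {A ∈ independentSubsets c k | y ∉ A} =
      {A ∈ (c.support.erase y).powersetCard k | ∀ b ∈ A, c b ∉ A} := by
    ext A
    simp only [independentSubsets, mem_filter, mem_powersetCard, subset_erase]
    tauto
  rw [hset, ← show n - 1 + 1 - k = n - k by omega, ← card_nonconsecutiveSubsets]
  convert card_filter_powersetCard_eq_card_nonconsecutiveSubsets (f := c)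
    (φ := fun i => (c ^ (i + 1)) y) ?_ ?_ ?_ using 3
  · intro i hi j hj h
    simp only [coe_range, Set.mem_Iio] at hi hj
    have := (hinj (i + 1) (by omega) (j + 1) (by omega)).1 h
    omega
  · ext z
    simp only [mem_image, mem_range, mem_erase]
    constructor
    · rintro ⟨i, hi, rfl⟩
      refine ⟨fun h => ?_, pow_apply_mem_support.2 hy⟩
      have := (hinj (i + 1) (by omega) 0 (by omega)).1 h
      omega
    · rintro ⟨hzy, hz⟩
      obtain ⟨t, ht, rfl⟩ := hc.isCycleOn_support.exists_pow_eq hy hz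
      have : t ≠ 0 := by rintro rfl; exact hzy rfl
      exact ⟨t - 1, by omega, by rw [Nat.sub_add_cancel (by omega)]⟩
  · intro i hi i' hi'
    rw [← mul_apply, ← pow_succ']
    obtain hlt | heq := lt_or_eq_of_le (show i + 1 + 1 ≤ n by omega)
    · rw [hinj _ hlt _ (by omega)]
      omega
    · rw [heq, hc.isCycleOn_support.pow_card_apply hy]
      refine iff_of_false (fun h => ?_) (by omega)
      have := (hinj 0 (by omega) (i' + 1) (by omega)).1 h
      omega

theorem IsCycle.card_independentSubsets_mul {c : Perm α} (hc : c.IsCycle) (k : ℕ) :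
    #(independentSubsets c k) * (#c.support - k) = #c.support * (#c.support - k).choose k := by
  refine card_mul_eq_card_mul (fun A y => y ∉ A) (fun A hA => ?_)
    (fun y hy => hc.card_filter_notMem_independentSubsets hy k)
  obtain ⟨hA, hcard, -⟩ := mem_independentSubsets.1 hA
  rw [bipartiteAbove, filter_notMem_eq_sdiff, card_sdiff_of_subset hA, hcard]

/-- `W` is the product of the transpositions `(b, c b)`, `b ∈ A`, and `W * c` is the cycle `c`
with the points of `A` deleted. -/
structure IsDeletion (c W : Perm α) (A : Finset α) : Prop where
  cycleType_eq : W.cycleType = Multiset.replicate #A 2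
  apply_of_mem : ∀ b ∈ A, W b = c b
  apply_of_notMem : ∀ y ∉ A, y ∉ A.image c → W y = y
  isCycle_mul : (W * c).IsCycle
  support_mul : (W * c).support = c.support \ A

lemma IsDeletion.mul_swap {c W : Perm α} {A : Finset α} {x : α} (hxA : x ∉ A)
    (hindep : ∀ b ∈ insert x A, c b ∉ insert x A) (hx : c x ≠ x) (hcx : c (c x) ≠ x)
    (hW : IsDeletion (swap x (c x) * c) W A) : IsDeletion c (W * swap x (c x)) (insert x A) := by
  have hagree := fun b => swap_mul_apply_of_mem hxA hindep (b := b)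
  have hcxA : c x ∉ insert x A := hindep x (mem_insert_self x A)
  have hWfix := image_congr hagree ▸ hW.apply_of_notMem
  have hWx : W x = x := hWfix x hxA fun h => by
    obtain ⟨b, hb, hbx⟩ := mem_image.1 h
    exact hindep b (mem_insert_of_mem hb) (hbx ▸ mem_insert_self x A)
  have hWcx : W (c x) = c x := hWfix (c x) (fun h => hcxA (mem_insert_of_mem h)) fun h => by
    obtain ⟨b, hb, hbx⟩ := mem_image.1 h
    exact hxA (c.injective hbx ▸ hb)
  have hdisj : W.Disjoint (swap x (c x)) := fun y => by
    by_cases hy : y = x ∨ y = c x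
    · rcases hy with rfl | rfl
      exacts [Or.inl hWx, Or.inl hWcx]
    · simp only [not_or] at hy
      exact Or.inr (swap_apply_of_ne_of_ne hy.1 hy.2)
  constructor
  · rw [hdisj.cycleType_mul, hW.cycleType_eq, isSwap_iff_cycleType.1 ⟨x, c x, hx.symm, rfl⟩,
      card_insert_of_notMem hxA, Multiset.replicate_succ, add_comm, Multiset.singleton_add]
  · intro b hb
    rcases mem_insert.1 hb with rfl | hb
    · rw [mul_apply, swap_apply_left, hWcx]
    · rw [mul_apply, swap_apply_of_ne_of_ne (fun h : b = x => hxA (h ▸ hb))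
        (fun h : b = c x => hcxA (h ▸ mem_insert_of_mem hb)), hW.apply_of_mem b hb, hagree b hb]
  · intro y hy hyc
    simp only [mem_insert, not_or, image_insert] at hy hyc
    rw [mul_apply, swap_apply_of_ne_of_ne hy.1 hyc.1, hWfix y hy.2 hyc.2]
  · rw [mul_assoc]
    exact hW.isCycle_mul
  · rw [mul_assoc, hW.support_mul, support_swap_mul_eq c x hcx, sdiff_sdiff_left, sup_eq_union,
      insert_eq]

theorem IsCycle.exists_isDeletion {c : Perm α} (hc : c.IsCycle) {A : Finset α}
    (hA : A ⊆ c.support) (hindep : ∀ b ∈ A, c b ∉ A) (hcard : #A + 2 ≤ #c.support) :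
    ∃ W : Perm α, IsDeletion c W A := by
  induction A using Finset.induction_on generalizing c with
  | empty => exact ⟨1, by simp, by simp, by simp, by simpa using hc, by simp⟩
  | @insert x A hxA ih =>
  have hxs : x ∈ c.support := hA (mem_insert_self x A)
  have hcx : c (c x) ≠ x := hc.apply_apply_ne (by grind) hxs
  have hsupp : (swap x (c x) * c).support = c.support \ {x} := support_swap_mul_eq c x hcx
  have hagree := fun b => swap_mul_apply_of_mem hxA hindep (b := b)
  obtain ⟨W, hW⟩ := ih (hc.swap_mul (mem_support.1 hxs) hcx)
    (fun b hb => by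
      rw [hsupp, mem_sdiff, mem_singleton]
      exact ⟨hA (mem_insert_of_mem hb), fun h => hxA (h ▸ hb)⟩)
    (fun b hb h => hindep b (mem_insert_of_mem hb) (mem_insert_of_mem (hagree b hb ▸ h)))
    (by rw [hsupp, card_sdiff_of_subset (singleton_subset_iff.2 hxs), card_singleton]
        rw [card_insert_of_notMem hxA] at hcard
        omega)
  exact ⟨_, hW.mul_swap hxA hindep (mem_support.1 hxs) hcx⟩

lemma Disjoint.mul_apply_of_mem_support_left {δ c : Perm α} (h : δ.Disjoint c) {y : α}
    (hy : y ∈ δ.support) : (δ * c) y = δ y := by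
  rw [mul_apply, notMem_support.1 (h.mem_imp hy)]

lemma Disjoint.mul_apply_of_mem_support_right {δ c : Perm α} (h : δ.Disjoint c) {y : α}
    (hy : y ∈ c.support) : (δ * c) y = c y := by
  rw [mul_apply, notMem_support.1 (h.symm.mem_imp (apply_mem_support.2 hy))]

def agreementSet (σ c : Perm α) : Finset α :=
  {b ∈ c.support | σ b = c b}

lemma mem_agreementSet {σ c : Perm α} {b : α} :
    b ∈ agreementSet σ c ↔ b ∈ c.support ∧ σ b = c b :=
  mem_filter

lemma agreementSet_subset (σ c : Perm α) : agreementSet σ c ⊆ c.support :=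
  filter_subset _ _

section Factorization

variable {δ c σ : Perm α}

theorem card_add_card_le_card_agreementSet (hdc : δ.Disjoint c) (σ : Perm α) :
    #δ.support + #c.support ≤
      #(agreementSet σ δ) + #(agreementSet σ c) + #(σ⁻¹ * (δ * c)).support := by
  -- a point of `(δ * c).support` where `σ` and `δ * c` disagree is moved by `σ⁻¹ * (δ * c)`
  have key : ∀ {g : Perm α} {y : α}, y ∈ g.support → (δ * c) y = g y →
      y ∈ agreementSet σ g ∨ y ∈ (σ⁻¹ * (δ * c)).support := fun {g y} hy hρ => by
    by_cases h : σ y = g y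
    · exact Or.inl (mem_agreementSet.2 ⟨hy, h⟩)
    · refine Or.inr (mem_support.2 fun h' => h ?_)
      rw [mul_apply, hρ, inv_eq_iff_eq] at h'
      exact h'.symm
  have hsub : (δ * c).support ⊆
      agreementSet σ δ ∪ agreementSet σ c ∪ (σ⁻¹ * (δ * c)).support := fun y hy => by
    simp only [mem_union]
    rcases mem_union.1 (hdc.support_mul ▸ hy) with hy | hy
    · rcases key hy (hdc.mul_apply_of_mem_support_left hy) with h | h <;> simp [h]
    · rcases key hy (hdc.mul_apply_of_mem_support_right hy) with h | h <;> simp [h]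
  have := card_le_card hsub
  have := card_union_le (agreementSet σ δ ∪ agreementSet σ c) (σ⁻¹ * (δ * c)).support
  have := card_union_le (agreementSet σ δ) (agreementSet σ c)
  rw [← card_union_of_disjoint hdc.disjoint_support, ← hdc.support_mul]
  omega

theorem agreementSet_independent (hσ : σ ^ 2 = 1) (hc : c.IsCycle) (h3 : 3 ≤ #c.support) :
    ∀ b ∈ agreementSet σ c, c b ∉ agreementSet σ c := by
  intro b hb hcb
  rw [mem_agreementSet] at hb hcb
  refine hc.apply_apply_ne h3 hb.1 ?_
  rw [← hcb.2, ← hb.2, apply_apply_of_sq_eq_one hσ]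

theorem agreementSet_union_subset_support (hσ : σ ^ 2 = 1) :
    agreementSet σ δ ∪ (agreementSet σ c ∪ (agreementSet σ c).image c) ⊆ σ.support := by
  intro y hy
  simp only [mem_union, mem_image, mem_agreementSet] at hy
  rcases hy with ⟨hy, h⟩ | ⟨hy, h⟩ | ⟨b, ⟨hb, h⟩, rfl⟩
  · exact mem_support.2 (h ▸ mem_support.1 hy)
  · exact mem_support.2 (h ▸ mem_support.1 hy)
  · rw [mem_support, ← h, apply_apply_of_sq_eq_one hσ, h]
    exact (mem_support.1 hb).symm

theorem card_agreementSet_union (hdc : δ.Disjoint c) (hσ : σ ^ 2 = 1) (hc : c.IsCycle)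
    (h3 : 3 ≤ #c.support) :
    #(agreementSet σ δ ∪ (agreementSet σ c ∪ (agreementSet σ c).image c)) =
      #(agreementSet σ δ) + 2 * #(agreementSet σ c) := by
  set A := agreementSet σ c
  have hAc : A ∪ A.image c ⊆ c.support := union_subset (agreementSet_subset σ c) fun y hy => by
    obtain ⟨b, hb, rfl⟩ := mem_image.1 hy
    exact apply_mem_support.2 (agreementSet_subset σ c hb)
  have hAA : _root_.Disjoint A (A.image c) := disjoint_left.2 fun _ hcb himg => by
    obtain ⟨b, hb, rfl⟩ := mem_image.1 himg
    exact agreementSet_independent hσ hc h3 b hb hcb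
  rw [card_union_of_disjoint (disjoint_of_subset_left (agreementSet_subset σ δ)
    (disjoint_of_subset_right hAc hdc.disjoint_support)), card_union_of_disjoint hAA,
    card_image_of_injective A c.injective, two_mul]

theorem IsCycle.agreementSet_of_card_support {k : ℕ} (hdc : δ.Disjoint c) (hc : c.IsCycle)
    (h3 : 3 ≤ #c.support) (hσ : σ ^ 2 = 1) (hσsupp : #σ.support = #δ.support + 2 * k)
    (hτ : #(σ⁻¹ * (δ * c)).support + k ≤ #c.support) :
    #(agreementSet σ c) = k ∧ agreementSet σ δ = δ.support ∧
      σ.support = δ.support ∪ (agreementSet σ c ∪ (agreementSet σ c).image c) := by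
  -- the bounds `h1`, `h2`, `hδ` leave no slack, so all of them are equalities
  have h1 := card_add_card_le_card_agreementSet hdc σ
  have h2 := card_le_card (agreementSet_union_subset_support (δ := δ) (c := c) hσ)
  rw [card_agreementSet_union hdc hσ hc h3] at h2
  have hδ := card_le_card (agreementSet_subset σ δ)
  have hE : agreementSet σ δ = δ.support :=
    eq_of_subset_of_card_le (agreementSet_subset σ δ) (by omega)
  refine ⟨by omega, hE, ?_⟩
  rw [← hE]
  refine (eq_of_subset_of_card_le (agreementSet_union_subset_support hσ) ?_).symm
  rw [card_agreementSet_union hdc hσ hc h3]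
  omega

theorem IsDeletion.eq_mul_of_agreementSet {W : Perm α} (hW : IsDeletion c W (agreementSet σ c))
    (hdc : δ.Disjoint c) (hσ : σ ^ 2 = 1) (hE : agreementSet σ δ = δ.support)
    (hsupp : σ.support = δ.support ∪ (agreementSet σ c ∪ (agreementSet σ c).image c)) :
    σ = δ * W := by
  set A := agreementSet σ c
  have hW2 := (cycleType_eq_replicate_two_iff.1 hW.cycleType_eq).1
  ext x
  rw [mul_apply]
  by_cases hx : x ∈ δ.support
  · have hxc : x ∉ c.support := hdc.mem_imp hx
    rw [hW.apply_of_notMem x (fun h => hxc (agreementSet_subset σ c h)) fun h => hxc (by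
      obtain ⟨b, hb, rfl⟩ := mem_image.1 h
      exact apply_mem_support.2 (agreementSet_subset σ c hb))]
    exact (mem_agreementSet.1 (hE ▸ hx)).2
  by_cases hxA : x ∈ A
  · rw [hW.apply_of_mem x hxA, notMem_support.1 (hdc.symm.mem_imp (apply_mem_support.2
      (agreementSet_subset σ c hxA)))]
    exact (mem_agreementSet.1 hxA).2
  by_cases hxc : x ∈ A.image c
  · obtain ⟨b, hb, rfl⟩ := mem_image.1 hxc
    have hσb : σ (c b) = b := by
      rw [← (mem_agreementSet.1 hb).2, apply_apply_of_sq_eq_one hσ]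
    have hWb : W (c b) = b := by rw [← hW.apply_of_mem b hb, apply_apply_of_sq_eq_one hW2]
    rw [hσb, hWb, notMem_support.1 (hdc.symm.mem_imp (agreementSet_subset σ c hb))]
  · have hxσ : x ∉ σ.support := by simp [hsupp, hx, hxA, hxc]
    rw [hW.apply_of_notMem x hxA hxc, notMem_support.1 hx, notMem_support.1 hxσ]

lemma IsDeletion.disjoint {A : Finset α} {W : Perm α} (hW : IsDeletion c W A)
    (hA : A ⊆ c.support) (hdc : δ.Disjoint c) : δ.Disjoint W := fun y => by
  by_cases hy : y ∈ c.support
  · exact Or.inl (notMem_support.1 (hdc.symm.mem_imp hy))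
  · refine Or.inr (hW.apply_of_notMem y (fun h => hy (hA h)) fun h => hy ?_)
    obtain ⟨b, hb, rfl⟩ := mem_image.1 h
    exact apply_mem_support.2 (hA hb)

theorem IsDeletion.agreementSet_mul {A : Finset α} {W : Perm α} (hW : IsDeletion c W A)
    (hA : A ⊆ c.support) (hdc : δ.Disjoint c) (hc : c.IsCycle) (h3 : 3 ≤ #c.support) :
    agreementSet (δ * W) c = A := by
  have hW2 := (cycleType_eq_replicate_two_iff.1 hW.cycleType_eq).1
  ext b
  rw [mem_agreementSet, mul_apply]
  refine ⟨fun ⟨hb, hδW⟩ => ?_, fun hb => ⟨hA hb, ?_⟩⟩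
  · by_contra hbA
    by_cases hbc : b ∈ A.image c
    · obtain ⟨a, ha, rfl⟩ := mem_image.1 hbc
      rw [← hW.apply_of_mem a ha, apply_apply_of_sq_eq_one hW2,
        notMem_support.1 (hdc.symm.mem_imp (hA ha)), hW.apply_of_mem a ha] at hδW
      exact hc.apply_apply_ne h3 (hA ha) hδW.symm
    · rw [hW.apply_of_notMem b hbA hbc, notMem_support.1 (hdc.symm.mem_imp hb)] at hδW
      exact mem_support.1 hb hδW.symm
  · rw [hW.apply_of_mem b hb, notMem_support.1 (hdc.symm.mem_imp (apply_mem_support.2 (hA hb)))]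

variable {r k m : ℕ}

theorem IsCycle.agreementSet_of_cycleType (hdc : δ.Disjoint c)
    (hδ : δ.cycleType = Multiset.replicate r 2) (hc : c.IsCycle) (h3 : 3 ≤ #c.support)
    (hkm : k + m = #c.support)
    (hστ : σ.cycleType = Multiset.replicate (r + k) 2 ∧ (σ⁻¹ * (δ * c)).cycleType = {m}) :
    σ ^ 2 = 1 ∧ #(agreementSet σ c) = k ∧ agreementSet σ δ = δ.support ∧
      σ.support = δ.support ∪ (agreementSet σ c ∪ (agreementSet σ c).image c) := by
  obtain ⟨hσ2, hσsupp⟩ := cycleType_eq_replicate_two_iff.1 hστ.1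
  have hδsupp := (cycleType_eq_replicate_two_iff.1 hδ).2
  have hτsupp : #(σ⁻¹ * (δ * c)).support = m := by
    rw [← sum_cycleType, hστ.2, Multiset.sum_singleton]
  exact ⟨hσ2, hc.agreementSet_of_card_support hdc h3 hσ2 (by omega) (by omega)⟩

theorem IsDeletion.cycleType_mul {A : Finset α} {W : Perm α} (hW : IsDeletion c W A)
    (hA : A ⊆ c.support) (hdc : δ.Disjoint c) (hδ : δ.cycleType = Multiset.replicate r 2)
    (hkm : #A + m = #c.support) :
    (δ * W).cycleType = Multiset.replicate (r + #A) 2 ∧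
      ((δ * W)⁻¹ * (δ * c)).cycleType = {m} := by
  have hW2 := (cycleType_eq_replicate_two_iff.1 hW.cycleType_eq).1
  refine ⟨?_, ?_⟩
  · rw [(hW.disjoint hA hdc).cycleType_mul, hδ, hW.cycleType_eq, Multiset.replicate_add]
  · rw [mul_inv_mul_mul_eq hW2, hW.isCycle_mul.cycleType, hW.support_mul,
      card_sdiff_of_subset hA]
    congr
    omega

theorem card_filter_cycleType_inv_mul_eq_card_independentSubsets (hdc : δ.Disjoint c)
    (hδ : δ.cycleType = Multiset.replicate r 2) (hc : c.IsCycle) (h3 : 3 ≤ #c.support)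
    (hm : 2 ≤ m) (hkm : k + m = #c.support) :
    #{σ : Perm α | σ.cycleType = Multiset.replicate (r + k) 2 ∧
      (σ⁻¹ * (δ * c)).cycleType = {m}} = #(c.independentSubsets k) := by
  have deletion : ∀ A ∈ c.independentSubsets k, ∃ W, IsDeletion c W A := fun A hA => by
    obtain ⟨hAc, hcard, hAind⟩ := mem_independentSubsets.1 hA
    exact hc.exists_isDeletion hAc hAind (by omega)
  refine card_bij (fun σ _ => agreementSet σ c) (fun σ hσ => ?_)
    (fun σ₁ h₁ σ₂ h₂ heq => ?_) fun A hA => ?_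
  · obtain ⟨hσ2, hcard, -⟩ := hc.agreementSet_of_cycleType hdc hδ h3 hkm (mem_filter.1 hσ).2
    exact mem_independentSubsets.2
      ⟨agreementSet_subset σ c, hcard, agreementSet_independent hσ2 hc h3⟩
  · obtain ⟨hσ₁, hcard, hE₁, hsupp₁⟩ :=
      hc.agreementSet_of_cycleType hdc hδ h3 hkm (mem_filter.1 h₁).2
    obtain ⟨hσ₂, -, hE₂, hsupp₂⟩ :=
      hc.agreementSet_of_cycleType hdc hδ h3 hkm (mem_filter.1 h₂).2
    obtain ⟨W, hW⟩ := deletion _ (mem_independentSubsets.2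
      ⟨agreementSet_subset σ₁ c, hcard, agreementSet_independent hσ₁ hc h3⟩)
    have hW₂ : IsDeletion c W (agreementSet σ₂ c) := heq ▸ hW
    rw [hW.eq_mul_of_agreementSet hdc hσ₁ hE₁ hsupp₁,
      hW₂.eq_mul_of_agreementSet hdc hσ₂ hE₂ hsupp₂]
  · obtain ⟨hAc, hcard, -⟩ := mem_independentSubsets.1 hA
    obtain ⟨W, hW⟩ := deletion A hA
    obtain ⟨hσ, hτ⟩ := hW.cycleType_mul hAc hdc hδ (m := m) (by omega)
    exact ⟨δ * W, mem_filter.2 ⟨mem_univ _, hcard ▸ hσ, hτ⟩,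
      hW.agreementSet_mul hAc hdc hc h3⟩

end Factorization

end Equiv.Perm

theorem card_filter_mul_eq_card_filter {G : Type*} [Group G] [Fintype G] [DecidableEq G]
    (P Q : G → Prop) [DecidablePred P] [DecidablePred Q] (g : G) :
    #{p : G × G | P p.1 ∧ Q p.2 ∧ p.1 * p.2 = g} = #{a : G | P a ∧ Q (a⁻¹ * g)} := by
  refine card_nbij' Prod.fst (fun a => (a, a⁻¹ * g)) ?_ ?_ ?_ ?_
  · rintro ⟨a, b⟩ h
    simp only [coe_filter, Set.mem_ofPred_eq, mem_univ, true_and] at h ⊢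
    obtain ⟨hP, hQ, rfl⟩ := h
    simpa [hP] using hQ
  · intro a h
    simp only [coe_filter, Set.mem_ofPred_eq, mem_univ, true_and] at h ⊢
    simpa using h
  · rintro ⟨a, b⟩ h
    simp only [coe_filter, Set.mem_ofPred_eq, mem_univ, true_and] at h
    simp [← h.2.2]
  · intro a _
    rfl

lemma binom_eq_choose {a b : ℤ} (ha : 0 ≤ a) (hb : 0 ≤ b) :
    binom a b = a.toNat.choose b.toNat := by
  unfold binom
  split_ifs with h
  · rfl
  · rw [Nat.choose_eq_zero_of_lt]
    omega

lemma binom_of_neg {a b : ℤ} (hb : b < 0) : binom a b = 0 :=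
  if_neg (by omega)

/-- Let `1 ≤ s ≤ j−1`, `0 ≤ r ≤ j−2`, and let `ρ ∈ S_h` have cycle type
`(2^r, j+1−r)`. Then the number of factorizations `ρ = στ` with `σ` of cycle type
`(2^s)` and `τ` a single `(j+1−s)`-cycle, multiplied by `j+1−s`, equals
`(j+1−r)·binom(j+1−s, s−r)`. -/
theorem count_factorizations (h j s r : ℕ) (hs1 : 1 ≤ s) (hs2 : s ≤ j - 1)
    (hr : r ≤ j - 2) (ρ : Equiv.Perm (Fin h))
    (hρ : ρ.cycleType = Multiset.replicate r 2 + {j + 1 - r}) :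
    (Finset.univ.filter
        (fun p : Equiv.Perm (Fin h) × Equiv.Perm (Fin h) =>
          p.1.cycleType = Multiset.replicate s 2 ∧
          p.2.cycleType = {j + 1 - s} ∧ p.1 * p.2 = ρ)).card * (j + 1 - s) =
      (j + 1 - r) * binom ((j : ℤ) + 1 - s) ((s : ℤ) - r) := by
  obtain ⟨δ, c, hdc, rfl, hδ, hc, hcn⟩ := exists_disjoint_mul_isCycle_of_cycleType_eq_add hρ
  rw [card_filter_mul_eq_card_filter (fun σ : Perm (Fin h) => σ.cycleType =
    Multiset.replicate s 2) (fun τ => τ.cycleType = {j + 1 - s})]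
  rcases le_or_gt r s with hrs | hsr
  · obtain ⟨k, rfl⟩ := Nat.exists_eq_add_of_le hrs
    have hcount := hc.card_independentSubsets_mul k
    rw [hcn, show j + 1 - r - k = j + 1 - (r + k) by omega] at hcount
    rw [card_filter_cycleType_inv_mul_eq_card_independentSubsets hdc hδ hc (by omega)
      (m := j + 1 - (r + k)) (by omega) (by omega), hcount, binom_eq_choose (by omega) (by omega)]
    congr 2 <;> omega
  · rw [binom_of_neg (by omega), mul_zero, mul_eq_zero, card_eq_zero, filter_eq_empty_iff]
    refine Or.inl fun σ _ ⟨hσ, hτ⟩ => ?_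
    have := card_support_le_card_support_add σ (δ * c)
    rw [← sum_cycleType, hρ, ← sum_cycleType σ, hσ,
      ← sum_cycleType (σ⁻¹ * (δ * c)), hτ] at this
    simp only [Multiset.sum_add, Multiset.sum_replicate, smul_eq_mul, Multiset.sum_singleton]
      at this
    omega
end

section
/- Let h and j ≥ 1 be integers and let ρ ∈ S_h be a permutation whose cycle type is Multiset.replicate j 2 (a product of j pairwise disjoint transpositions). Then the number of pairs (σ, τ) of permutations of S_h with σ of cycle type Multiset.replicate (j−1) 2, τ a transposition (cycle type {2}), and στ = ρ, is exactly j. -/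
/-- Let `j ≥ 1` and let `ρ ∈ S_h` be a product of `j` pairwise disjoint
transpositions. Then the number of factorizations `ρ = στ` with `σ` a product of
`j−1` disjoint transpositions and `τ` a transposition is exactly `j`. -/
theorem count_factorizations_transposition (h j : ℕ) (hj : 1 ≤ j)
    (ρ : Equiv.Perm (Fin h)) (hρ : ρ.cycleType = Multiset.replicate j 2) :
    (Finset.univ.filter
        (fun p : Equiv.Perm (Fin h) × Equiv.Perm (Fin h) =>
          p.1.cycleType = Multiset.replicate (j - 1) 2 ∧
          p.2.cycleType = {2} ∧ p.1 * p.2 = ρ)).card = j := by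
  classical
  have hcard : ρ.cycleFactorsFinset.card = j := by
    have := congrArg Multiset.card hρ
    rwa [Equiv.Perm.cycleType_def, Multiset.card_map, Multiset.card_replicate,
      Finset.card_val] at this
  rw [Finset.card_bij (fun p _ => p.2), hcard]
  · -- membership
    intro p hp
    simp only [Finset.mem_filter, Finset.mem_univ, true_and] at hp
    obtain ⟨h1, h2, h3⟩ := hp
    -- τ := p.2 is a cycle
    have hτc : p.2.IsCycle := Equiv.Perm.card_cycleType_eq_one.1 (by rw [h2]; rfl)
    -- support cards
    have hsρ : ρ.support.card = 2 * j := by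
      rw [← Equiv.Perm.sum_cycleType, hρ, Multiset.sum_replicate, smul_eq_mul, Nat.mul_comm]
    have hsσ : p.1.support.card = 2 * (j - 1) := by
      rw [← Equiv.Perm.sum_cycleType, h1, Multiset.sum_replicate, smul_eq_mul, Nat.mul_comm]
    have hsτ : p.2.support.card = 2 := by
      rw [← Equiv.Perm.sum_cycleType, h2]; rfl
    have hsub : ρ.support ⊆ p.1.support ∪ p.2.support := by
      rw [← h3]; exact Equiv.Perm.support_mul_le p.1 p.2
    have hle : 2 * j ≤ (p.1.support ∪ p.2.support).card := by
      rw [← hsρ]; exact Finset.card_le_card hsub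
    have hle2 : (p.1.support ∪ p.2.support).card ≤ 2 * j := by
      calc (p.1.support ∪ p.2.support).card ≤ p.1.support.card + p.2.support.card :=
            Finset.card_union_le _ _
        _ = 2 * (j - 1) + 2 := by rw [hsσ, hsτ]
        _ = 2 * j := by omega
    have hdisj : Disjoint p.1.support p.2.support := by
      rw [← Finset.card_union_eq_card_add_card]
      omega
    have hdisj' : p.1.Disjoint p.2 :=
      Equiv.Perm.disjoint_iff_disjoint_support.2 hdisj
    rw [Equiv.Perm.mem_cycleFactorsFinset_iff]
    refine ⟨hτc, fun a ha => ?_⟩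
    have ha' : p.2 a ∈ p.2.support := Equiv.Perm.apply_mem_support.2 ha
    have h1a : p.1 (p.2 a) = p.2 a := by
      rcases hdisj' (p.2 a) with hh | hh
      · exact hh
      · exact absurd hh (Equiv.Perm.mem_support.1 ha')
    rw [← h3]
    simpa using h1a.symm
  · -- injective
    intro p hp q hq hpq
    simp only [Finset.mem_filter, Finset.mem_univ, true_and] at hp hq
    have : p.1 = q.1 := by
      have := hp.2.2.trans hq.2.2.symm
      rw [hpq] at this
      exact mul_right_cancel this
    exact Prod.ext this hpq
  · -- surjective
    intro c hc
    have hcyc : c.IsCycle := (Equiv.Perm.mem_cycleFactorsFinset_iff.1 hc).1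
    have hc2 : c.support.card = 2 := by
      have : c.support.card ∈ ρ.cycleType := by
        rw [Equiv.Perm.cycleType_def]
        exact Multiset.mem_map_of_mem _ hc
      rw [hρ] at this
      exact Multiset.eq_of_mem_replicate this
    refine ⟨(ρ * c⁻¹, c), ?_, rfl⟩
    simp only [Finset.mem_filter, Finset.mem_univ, true_and]
    refine ⟨?_, ?_, by group⟩
    · -- cycleType of ρ * c⁻¹
      rw [Equiv.Perm.cycleType_def,
        Equiv.Perm.cycleFactorsFinset_mul_inv_mem_eq_sdiff hc]
      apply Multiset.eq_replicate.2
      constructor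
      · rw [Multiset.card_map, Finset.card_val, Finset.card_sdiff_of_subset (by simpa using hc),
          hcard, Finset.card_singleton]
      · intro b hb
        obtain ⟨d, hd, rfl⟩ := Multiset.mem_map.1 hb
        have hd' : d ∈ ρ.cycleFactorsFinset := by
          rw [← Finset.mem_def] at hd
          exact (Finset.mem_sdiff.1 hd).1
        have : (Function.comp Finset.card Equiv.Perm.support) d ∈ ρ.cycleType := by
          rw [Equiv.Perm.cycleType_def]
          exact Multiset.mem_map_of_mem _ hd'
        rw [hρ] at this
        exact Multiset.eq_of_mem_replicate this
    · rw [hcyc.cycleType, hc2]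
end

section
/- Let σ and τ be permutations of a finite type, where σ has cycle type (2,…,2) with s twos (a product of s pairwise disjoint transpositions) and τ has cycle type {c} (a single c-cycle, c ≥ 2). If the norms are additive, N(στ) = N(σ) + N(τ) = s + (c−1), then every transposition in the cycle decomposition of σ moves at most one point moved by τ; that is, for every point a, if σ a ≠ a and τ a ≠ a, then τ (σ a) = σ a. -/
open Equiv Equiv.Perm Finset

namespace Setoid

variable {α : Type*}

def mergeClasses (r : Setoid α) (x y : α) : Setoid α where
  r u v := r u v ∨ r u x ∧ r y v ∨ r u y ∧ r x v
  iseqv := by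
    refine ⟨fun u => Or.inl (r.refl u), ?_, ?_⟩
    · rintro u v (h | ⟨h₁, h₂⟩ | ⟨h₁, h₂⟩)
      exacts [Or.inl (r.symm h), Or.inr (Or.inr ⟨r.symm h₂, r.symm h₁⟩),
        Or.inr (Or.inl ⟨r.symm h₂, r.symm h₁⟩)]
    · have t := @r.iseqv.trans
      rintro u v w (h | ⟨h₁, h₂⟩ | ⟨h₁, h₂⟩) (h' | ⟨h₁', h₂'⟩ | ⟨h₁', h₂'⟩)
      exacts [Or.inl (t h h'), Or.inr (Or.inl ⟨t h h₁', h₂'⟩), Or.inr (Or.inr ⟨t h h₁', h₂'⟩),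
        Or.inr (Or.inl ⟨h₁, t h₂ h'⟩), Or.inr (Or.inl ⟨h₁, h₂'⟩), Or.inl (t h₁ h₂'),
        Or.inr (Or.inr ⟨h₁, t h₂ h'⟩), Or.inl (t h₁ h₂'), Or.inr (Or.inr ⟨h₁, h₂'⟩)]

theorem le_mergeClasses (r : Setoid α) (x y : α) : r ≤ r.mergeClasses x y :=
  fun _ _ => Or.inl

theorem mergeClasses_rel (r : Setoid α) (x y : α) : r.mergeClasses x y x y :=
  Or.inr (Or.inl ⟨r.refl x, r.refl y⟩)

theorem card_quotient_le_card_quotient_mergeClasses_add_one [Finite α] (r : Setoid α)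
    (x y : α) : Nat.card (Quotient r) ≤ Nat.card (Quotient (r.mergeClasses x y)) + 1 := by
  classical
  let ι : Quotient r → Option (Quotient (r.mergeClasses x y)) := fun q =>
    if q = ⟦y⟧ then none else some (map_of_le (r.le_mergeClasses x y) q)
  have hι : Function.Injective ι := by
    intro p q hpq
    induction p using Quotient.ind with | _ u
    induction q using Quotient.ind with | _ v
    apply Quotient.sound
    by_cases hu : r u y <;> by_cases hv : r v y <;>
      simp only [ι, map_of_le, Quotient.eq, hu, hv, ↓reduceIte, Quotient.map'_mk'', id_eq,
        reduceCtorEq, Option.some.injEq] at hpq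
    · exact r.trans hu (r.symm hv)
    · rcases hpq with h | ⟨-, h⟩ | ⟨h, -⟩
      exacts [h, absurd (r.symm h) hv, absurd h hu]
  simpa using Nat.card_le_card_of_injective ι hι

end Setoid

namespace Equiv.Perm

variable {α : Type*}

theorem SameCycle.setoid_le {f : Perm α} {r : Setoid α} (h : ∀ x, r x (f x)) :
    SameCycle.setoid f ≤ r := by
  rintro x _ ⟨i, rfl⟩
  induction i using Int.induction_on with
  | zero => exact r.refl x
  | succ i ih =>
    rw [add_comm, zpow_add, zpow_one, mul_apply]
    exact r.trans ih (h _)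
  | pred i ih =>
    rw [sub_eq_add_neg, add_comm, zpow_add, zpow_neg_one, mul_apply]
    refine r.trans ih (r.symm ?_)
    simpa only [coe_inv, apply_symm_apply] using h (f⁻¹ ((f ^ (-i : ℤ)) x))

section DecidableEq

variable [DecidableEq α]

theorem sameCycle_setoid_swap_mul_le (f : Perm α) (x y : α) :
    SameCycle.setoid (swap x y * f) ≤ (SameCycle.setoid f).mergeClasses x y := by
  set m := (SameCycle.setoid f).mergeClasses x y
  have hswap : ∀ w, m w (swap x y w) := by
    intro w
    rw [swap_apply_def]
    split_ifs with hx hy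
    · exact hx ▸ Setoid.mergeClasses_rel _ x y
    · exact hy ▸ m.symm (Setoid.mergeClasses_rel _ x y)
    · exact m.refl w
  exact SameCycle.setoid_le fun w =>
    m.trans (Setoid.le_mergeClasses _ x y (sameCycle_apply_right.2 SameCycle.rfl)) (hswap (f w))

theorem disjoint_mul_swap_swap {f : Perm α} {a : α} (h : f (f a) = a) :
    Disjoint (f * swap a (f a)) (swap a (f a)) := by
  intro x
  by_cases hxa : x = a
  · exact Or.inl (by simp [hxa, h])
  by_cases hxb : x = f a
  · exact Or.inl (by simp [hxb])
  · exact Or.inr (swap_apply_of_ne_of_ne hxa hxb)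

end DecidableEq

variable [Fintype α] [DecidableEq α]

theorem permNorm_add_card_cycleType (f : Perm α) :
    permNorm f + Multiset.card f.cycleType = f.cycleType.sum :=
  calc permNorm f + Multiset.card f.cycleType
      = (f.cycleType.map (· - 1)).sum + (f.cycleType.map fun _ => 1).sum := by simp [permNorm]
    _ = (f.cycleType.map fun n => n - 1 + 1).sum := Multiset.sum_map_add.symm
    _ = f.cycleType.sum := by
      rw [Multiset.map_congr rfl fun n hn => Nat.sub_add_cancel
        (one_le_two.trans (two_le_of_mem_cycleType hn)), Multiset.map_id']

theorem sign_eq_neg_one_pow_permNorm (f : Perm α) : sign f = (-1) ^ permNorm f := by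
  rw [sign_of_cycleType, ← permNorm_add_card_cycleType, add_assoc, ← two_mul, pow_add, pow_mul]
  simp

theorem permNorm_lt_card_support {f : Perm α} (hf : f ≠ 1) : permNorm f < #f.support := by
  have h := permNorm_add_card_cycleType f
  have : Multiset.card f.cycleType ≠ 0 := by simpa using hf
  rw [sum_cycleType] at h
  omega

theorem Disjoint.permNorm_mul_s17 {f g : Perm α} (h : Disjoint f g) :
    permNorm (f * g) = permNorm f + permNorm g := by
  simp [permNorm, h.cycleType_mul]

theorem IsCycle.permNorm_eq_s17 {f : Perm α} (hf : IsCycle f) : permNorm f = #f.support - 1 := by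
  simp [permNorm, hf.cycleType]

theorem permNorm_swap {a b : α} (hab : a ≠ b) : permNorm (swap a b) = 1 := by
  rw [(isCycle_swap hab).permNorm_eq_s17, card_support_swap hab]

def cycleOrFixedPoint (f : Perm α) (x : α) : f.cycleFactorsFinset ⊕ Function.fixedPoints f :=
  if hx : f x = x then .inr ⟨x, hx⟩
  else .inl ⟨f.cycleOf x, cycleOf_mem_cycleFactorsFinset_iff.2 (mem_support.2 hx)⟩

theorem cycleOrFixedPoint_eq_iff {f : Perm α} {x y : α} :
    f.cycleOrFixedPoint x = f.cycleOrFixedPoint y ↔ f.SameCycle x y := by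
  refine ⟨fun h => ?_, fun h => ?_⟩
  · unfold cycleOrFixedPoint at h
    split_ifs at h with hx hy hy
    · obtain rfl : x = y := congrArg Subtype.val (Sum.inr_injective h)
      rfl
    · exact (sameCycle_iff_cycleOf_eq_of_mem_support (mem_support.2 hx) (mem_support.2 hy)).2
        (congrArg Subtype.val (Sum.inl_injective h))
  · unfold cycleOrFixedPoint
    by_cases hx : f x = x
    · obtain rfl := h.eq_of_left hx
      rfl
    · rw [dif_neg hx, dif_neg (mt h.apply_eq_self_iff.2 hx)]
      exact congrArg Sum.inl (Subtype.ext h.cycleOf_eq)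

theorem cycleOrFixedPoint_surjective (f : Perm α) : Function.Surjective f.cycleOrFixedPoint := by
  rintro (⟨c, hc⟩ | ⟨x, hx⟩)
  · obtain ⟨x, hxc⟩ := (mem_cycleFactorsFinset_iff.1 hc).1.nonempty_support
    have hx : f x ≠ x := mem_support.1 (mem_cycleFactorsFinset_support_le hc hxc)
    refine ⟨x, ?_⟩
    rw [cycleOrFixedPoint, dif_neg hx]
    exact congrArg Sum.inl (Subtype.ext (cycle_is_cycleOf hxc hc).symm)
  · exact ⟨x, dif_pos hx⟩

theorem permNorm_add_card_quotient_sameCycle (f : Perm α) :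
    permNorm f + Nat.card (Quotient (SameCycle.setoid f)) = Fintype.card α := by
  have hker : SameCycle.setoid f = Setoid.ker f.cycleOrFixedPoint :=
    Setoid.ext fun _ _ => cycleOrFixedPoint_eq_iff.symm
  rw [hker, Nat.card_congr (Setoid.quotientKerEquivOfSurjective _ f.cycleOrFixedPoint_surjective),
    Nat.card_sum, Nat.card_eq_fintype_card, Nat.card_eq_fintype_card, card_fixedPoints,
    Fintype.card_coe]
  have hcard : Multiset.card f.cycleType = #f.cycleFactorsFinset := by
    rw [cycleType_def, Multiset.card_map]
    rfl
  have := permNorm_add_card_cycleType f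
  have := sum_cycleType f ▸ f.support.card_le_univ
  omega

theorem permNorm_swap_mul_le (f : Perm α) (x y : α) :
    permNorm (swap x y * f) ≤ permNorm f + 1 := by
  have hf := permNorm_add_card_quotient_sameCycle f
  have hg := permNorm_add_card_quotient_sameCycle (swap x y * f)
  have hmerge := (SameCycle.setoid f).card_quotient_le_card_quotient_mergeClasses_add_one x y
  have hsplit := Nat.card_le_card_of_surjective
    (Setoid.map_of_le (sameCycle_setoid_swap_mul_le f x y)) (Quotient.ind fun a => ⟨⟦a⟧, rfl⟩)
  omega

theorem permNorm_zipWith_swap_prod_mul_le (l l' : List α) (g : Perm α) :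
    permNorm ((List.zipWith swap l l').prod * g) ≤ (List.zipWith swap l l').length + permNorm g := by
  induction l generalizing l' with
  | nil => simp
  | cons x l ih =>
    cases l' with
    | nil => simp
    | cons y l' =>
      rw [List.zipWith_cons_cons, List.prod_cons, List.length_cons, mul_assoc]
      have := permNorm_swap_mul_le ((List.zipWith swap l l').prod * g) x y
      have := ih l'
      omega

theorem IsCycle.permNorm_mul_le_s17 {c : Perm α} (hc : c.IsCycle) (g : Perm α) :
    permNorm (c * g) ≤ permNorm c + permNorm g := by
  obtain ⟨x, hx⟩ := hc.nonempty_support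
  rw [mem_support] at hx
  have hl : (toList c x).formPerm = c := by rw [formPerm_toList, hc.cycleOf_eq hx]
  have := permNorm_zipWith_swap_prod_mul_le (toList c x) (toList c x).tail g
  rwa [← List.formPerm, hl, List.length_zipWith, List.length_tail, length_toList, hc.cycleOf_eq hx,
    min_eq_right (Nat.sub_le _ 1), ← hc.permNorm_eq_s17] at this

theorem permNorm_mul_le_s17 (f g : Perm α) : permNorm (f * g) ≤ permNorm f + permNorm g := by
  induction f using cycle_induction_on generalizing g with
  | base_one => simp
  | base_cycles c hc => exact hc.permNorm_mul_le_s17 g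
  | induction_disjoint c f hcf hc _ ih =>
    rw [mul_assoc, hcf.permNorm_mul_s17]
    have := hc.permNorm_mul_le_s17 (f * g)
    have := ih g
    omega

theorem apply_apply_eq_self_of_cycleType_eq_replicate_two {σ : Perm α} {s : ℕ}
    (hσ : σ.cycleType = Multiset.replicate s 2) (a : α) : σ (σ a) = a := by
  have hσ2 : σ ^ 2 = 1 := orderOf_dvd_iff_pow_eq_one.1 <| lcm_cycleType σ ▸
    Multiset.lcm_dvd.2 fun n hn => by rw [hσ] at hn; rw [Multiset.eq_of_mem_replicate hn]
  rw [← mul_apply, ← sq, hσ2, one_apply]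

theorem IsCycle.permNorm_swap_mul_add_two_le {τ : Perm α} (hτ : τ.IsCycle) {a b : α}
    (hab : a ≠ b) (ha : a ∈ τ.support) (hb : b ∈ τ.support) :
    permNorm (swap a b * τ) + 2 ≤ #τ.support := by
  by_cases hg : swap a b * τ = 1
  · simp only [hg, permNorm, cycleType_one, Multiset.map_zero, Multiset.sum_zero, zero_add]
    exact Finset.one_lt_card.2 ⟨a, ha, b, hb, hab⟩
  have hsupp : (swap a b * τ).support ⊆ τ.support := by
    refine (support_mul_le _ _).trans (Finset.union_subset ?_ subset_rfl)
    rw [support_swap hab]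
    exact Finset.insert_subset ha (Finset.singleton_subset_iff.2 hb)
  have hlt := (permNorm_lt_card_support hg).trans_le (Finset.card_le_card hsupp)
  have hparity : permNorm (swap a b * τ) + 1 ≠ #τ.support := by
    intro h
    have := sign_eq_neg_one_pow_permNorm (swap a b * τ)
    rw [sign_mul, sign_swap hab, hτ.sign, ← h, pow_succ] at this
    simp at this
  omega

end Equiv.Perm

theorem geodesic_pair_transpositions_general {α : Type*} [Fintype α] [DecidableEq α]
    (σ τ : Equiv.Perm α) (s c : ℕ)
    (hσ : σ.cycleType = Multiset.replicate s 2) (hτ : τ.cycleType = {c})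
    (hadd : permNorm (σ * τ) = s + (c - 1)) :
    ∀ a : α, σ a ≠ a → τ a ≠ a → τ (σ a) = σ a := by
  intro a hσa hτa
  by_contra hτσa
  have hσs : permNorm σ = s := by simp [permNorm, hσ]
  have hσ' : permNorm (σ * swap a (σ a)) + 1 = s := by
    have := (disjoint_mul_swap_swap
      (apply_apply_eq_self_of_cycleType_eq_replicate_two hσ a)).permNorm_mul_s17
    rwa [mul_swap_mul_self, permNorm_swap (Ne.symm hσa), hσs, eq_comm] at this
  have hτcycle : τ.IsCycle := card_cycleType_eq_one.1 (by rw [hτ, Multiset.card_singleton])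
  have hτc : #τ.support = c := by rw [← sum_cycleType, hτ, Multiset.sum_singleton]
  have hsplit := hτcycle.permNorm_swap_mul_add_two_le (Ne.symm hσa) (mem_support.2 hτa)
    (mem_support.2 hτσa)
  have hsub := permNorm_mul_le_s17 (σ * swap a (σ a)) (swap a (σ a) * τ)
  rw [mul_assoc, swap_mul_self_mul, hadd] at hsub
  omega

/-- If `σ` is a product of `s` disjoint transpositions, `τ` a single `c`-cycle
(`c ≥ 2`), and the norms are additive (`N(στ) = s + (c−1)`), then every
transposition of `σ` moves at most one point moved by `τ`: for every point `a`,
if `σ a ≠ a` and `τ a ≠ a`, then `τ (σ a) = σ a`. -/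
theorem geodesic_pair_transpositions {α : Type*} [Fintype α] [DecidableEq α]
    (σ τ : Equiv.Perm α) (s c : ℕ) (hc : 2 ≤ c)
    (hσ : σ.cycleType = Multiset.replicate s 2) (hτ : τ.cycleType = {c})
    (hadd : permNorm (σ * τ) = s + (c - 1)) :
    ∀ a : α, σ a ≠ a → τ a ≠ a → τ (σ a) = σ a :=
  geodesic_pair_transpositions_general σ τ s c hσ hτ hadd
end
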